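/- For any greedy execution r_1, …, r_g on a one-red instance in which every blue feature belongs to at least one exemplar, we have n − g ≥ M/2, where n = |B| and M is the maximum margin over all subcollections of S; consequently the greedy subcollection {E ∈ S : the unique red feature of E is among r_1, …, r_g} has margin n − g, which is at least half the maximum margin. -/
import Mathlib


/-- The margin of a subcollection `S'` of exemplars in a TAP instance with
ground set `U` and target `T`. -/
def tapMargin {α : Type*} [DecidableEq α] (U T : Finset α) (S' : Finset (Finset α)) : ℤ :=
  (((S'.biUnion id) ∩ (U ∩ T)).card : ℤ) - (((S'.biUnion id) ∩ (U \ T)).card : ℤ)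

/-- The set of blue features covered by the red feature `r`: those blue features
appearing together with `r` in some exemplar of `S`. -/
def blueCov {α : Type*} [DecidableEq α] (U T : Finset α) (S : Finset (Finset α)) (r : α) :
    Finset α :=
  (U ∩ T).filter (fun b => ∃ E ∈ S, r ∈ E ∧ b ∈ E)

/-- The set of blue features covered by the red features chosen before step `i`
of a greedy execution `r`. -/
def prevCov {α : Type*} [DecidableEq α] (U T : Finset α) (S : Finset (Finset α))
    (g : ℕ) (r : Fin g → α) (i : Fin g) : Finset α :=
  (Finset.univ.filter (fun j => j < i)).biUnion (fun j => blueCov U T S (r j))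

/-- `r : Fin g → α` is a greedy execution on the (one-red) TAP instance `(U, T, S)`:
each `r i` is a red feature covering a positive, maximal number of blue features not
covered by `r 0, …, r (i-1)`, and together the `r i` cover all blue features. -/
def IsGreedyExec {α : Type*} [DecidableEq α] (U T : Finset α) (S : Finset (Finset α))
    (g : ℕ) (r : Fin g → α) : Prop :=
  (∀ i, r i ∈ U \ T) ∧
  (∀ i, 0 < ((blueCov U T S (r i)) \ prevCov U T S g r i).card) ∧
  (∀ i, ∀ r' ∈ U \ T,
    ((blueCov U T S r') \ prevCov U T S g r i).card ≤
      ((blueCov U T S (r i)) \ prevCov U T S g r i).card) ∧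
  (∀ b ∈ U ∩ T, ∃ i, b ∈ blueCov U T S (r i))

section Aux
variable {α : Type*} [DecidableEq α]

lemma blueCov_subset (U T : Finset α) (S : Finset (Finset α)) (x : α) :
    blueCov U T S x ⊆ U ∩ T := Finset.filter_subset _ _

lemma prevCov_eq (U T : Finset α) (S : Finset (Finset α)) (g : ℕ) (r : Fin g → α) (i : Fin g) :
    prevCov U T S g r i
      = (Finset.univ.filter (fun j : Fin g => (j : ℕ) < (i : ℕ))).biUnion
          (fun j => blueCov U T S (r j)) := by
  unfold prevCov
  congr 1

lemma tapMargin_le_of_greedy (U T : Finset α) (S : Finset (Finset α))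
    (honered : ∀ E ∈ S, (E ∩ (U \ T)).card = 1)
    (g : ℕ) (r : Fin g → α) (hgreedy : IsGreedyExec U T S g r)
    (S' : Finset (Finset α)) (hS' : S' ⊆ S) :
    tapMargin U T S' ≤ 2 * (((U ∩ T).card : ℤ) - g) := by
  obtain ⟨hred, hpos, hmax, hcover⟩ := hgreedy
  set m : Fin g → ℕ := fun i => ((blueCov U T S (r i)) \ prevCov U T S g r i).card with hm
  set cov : Fin g → Finset α := fun i => (blueCov U T S (r i)) \ prevCov U T S g r i with hcov
  set P : ℕ → Finset α := fun t =>
    (Finset.univ.filter (fun j : Fin g => (j : ℕ) < t)).biUnion (fun j => blueCov U T S (r j))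
    with hP
  have hprev : ∀ i : Fin g, prevCov U T S g r i = P (i : ℕ) := fun i => prevCov_eq U T S g r i
  -- every element of P t is newly covered at some step before t
  have hA : ∀ t : ℕ, P t ⊆ (Finset.univ.filter (fun j : Fin g => (j : ℕ) < t)).biUnion cov := by
    intro t b hb
    simp only [hP, Finset.mem_biUnion, Finset.mem_filter, Finset.mem_univ, true_and] at hb
    obtain ⟨j, hjt, hbj⟩ := hb
    set I := Finset.univ.filter (fun i : Fin g => b ∈ blueCov U T S (r i)) with hI
    have hne : I.Nonempty := ⟨j, by simp [hI, hbj]⟩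
    set i := I.min' hne with hi
    have hbi : b ∈ blueCov U T S (r i) :=
      (Finset.mem_filter.1 (I.min'_mem hne)).2
    have hij : i ≤ j := I.min'_le j (by simp [hI, hbj])
    have hnb : b ∉ prevCov U T S g r i := by
      rw [hprev]
      simp only [hP, Finset.mem_biUnion, Finset.mem_filter, Finset.mem_univ, true_and]
      rintro ⟨j', hj', hbj'⟩
      have h1 : i ≤ j' := I.min'_le j' (by simp [hI, hbj'])
      have h2 := Fin.le_def.1 h1
      omega
    refine Finset.mem_biUnion.2 ⟨i, ?_, ?_⟩
    · simp only [Finset.mem_filter, Finset.mem_univ, true_and]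
      have h2 := Fin.le_def.1 hij
      omega
    · rw [hcov]
      exact Finset.mem_sdiff.2 ⟨hbi, hnb⟩
  -- the newly covered sets are pairwise disjoint
  have hdisj : ∀ i ∈ (Finset.univ : Finset (Fin g)), ∀ j ∈ (Finset.univ : Finset (Fin g)),
      i ≠ j → Disjoint (cov i) (cov j) := by
    have key : ∀ i j : Fin g, i < j → Disjoint (cov j) (cov i) := by
      intro i j hij
      have hsub : cov i ⊆ prevCov U T S g r j := by
        refine Finset.Subset.trans Finset.sdiff_subset ?_
        intro b hb
        exact Finset.mem_biUnion.2 ⟨i, by simp [hij], hb⟩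
      exact (Finset.sdiff_disjoint).mono_right hsub
    intro i _ j _ hij
    rcases lt_or_gt_of_ne hij with h | h
    · exact (key i j h).symm
    · exact key j i h
  have hsum_le_n : (∑ i : Fin g, m i) ≤ (U ∩ T).card := by
    have h1 : (Finset.univ.biUnion cov).card = ∑ i : Fin g, m i := Finset.card_biUnion hdisj
    rw [← h1]
    apply Finset.card_le_card
    intro b hb
    obtain ⟨i, _, hbi⟩ := Finset.mem_biUnion.1 hb
    exact blueCov_subset U T S (r i) (Finset.mem_sdiff.1 hbi).1
  have hm1 : ∀ i, 1 ≤ m i := hpos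
  -- choose the threshold t
  obtain ⟨t, ht1, ht2⟩ : ∃ t : ℕ, (∀ j : Fin g, (j : ℕ) < t → 2 ≤ m j) ∧
      (∀ x ∈ U \ T, (blueCov U T S x \ P t).card ≤ 1) := by
    by_cases hW : (Finset.univ.filter (fun i : Fin g => m i ≤ 1)).Nonempty
    · set i0 := (Finset.univ.filter (fun i : Fin g => m i ≤ 1)).min' hW with hi0
      refine ⟨(i0 : ℕ), ?_, ?_⟩
      · intro j hj
        by_contra hc
        have hjW : j ∈ Finset.univ.filter (fun i : Fin g => m i ≤ 1) := by
          simp only [Finset.mem_filter, Finset.mem_univ, true_and]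
          omega
        have h1 := Finset.min'_le _ j hjW
        have h2 := Fin.le_def.1 h1
        omega
      · intro x hx
        have h1 : m i0 ≤ 1 := by
          have h := Finset.min'_mem _ hW
          exact (Finset.mem_filter.1 h).2
        calc (blueCov U T S x \ P (i0 : ℕ)).card
            = (blueCov U T S x \ prevCov U T S g r i0).card := by rw [hprev]
          _ ≤ m i0 := hmax i0 x hx
          _ ≤ 1 := h1
    · refine ⟨g, ?_, ?_⟩
      · intro j _
        have h : ¬ (m j ≤ 1) := by
          intro h
          exact hW ⟨j, by simp only [Finset.mem_filter, Finset.mem_univ, true_and]; exact h⟩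
        omega
      · intro x hx
        have hsub : blueCov U T S x ⊆ P g := by
          intro b hb
          have hbB : b ∈ U ∩ T := blueCov_subset U T S x hb
          obtain ⟨i, hbi⟩ := hcover b hbB
          exact Finset.mem_biUnion.2 ⟨i, by simp [i.isLt], hbi⟩
        rw [Finset.sdiff_eq_empty_iff_subset.2 hsub]
        simp
  -- each optimal blue feature is covered by some optimal red feature
  have hF1 : ∀ b ∈ (S'.biUnion id) ∩ (U ∩ T), ∃ x ∈ (S'.biUnion id) ∩ (U \ T),
      b ∈ blueCov U T S x := by
    intro b hb
    obtain ⟨hbU, hbB⟩ := Finset.mem_inter.1 hb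
    obtain ⟨E, hES', hbE⟩ := Finset.mem_biUnion.1 hbU
    have hES : E ∈ S := hS' hES'
    obtain ⟨x, hxE⟩ := Finset.card_eq_one.1 (honered E hES)
    have hx : x ∈ E ∩ (U \ T) := by rw [hxE]; simp
    obtain ⟨hxE', hxR⟩ := Finset.mem_inter.1 hx
    refine ⟨x, Finset.mem_inter.2 ⟨Finset.mem_biUnion.2 ⟨E, hES', hxE'⟩, hxR⟩, ?_⟩
    exact Finset.mem_filter.2 ⟨hbB, E, hES, hxE', hbE⟩
  set C := ∑ j ∈ Finset.univ.filter (fun j : Fin g => (j : ℕ) < t), m j with hC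
  set D := ∑ j ∈ Finset.univ.filter (fun j : Fin g => (j : ℕ) < t), (m j - 1) with hD
  have hsplit := Finset.card_inter_add_card_sdiff ((S'.biUnion id) ∩ (U ∩ T)) (P t)
  have h_in : (((S'.biUnion id) ∩ (U ∩ T)) ∩ P t).card ≤ C := by
    calc (((S'.biUnion id) ∩ (U ∩ T)) ∩ P t).card
        ≤ (P t).card := Finset.card_le_card Finset.inter_subset_right
      _ ≤ ((Finset.univ.filter (fun j : Fin g => (j : ℕ) < t)).biUnion cov).card :=
          Finset.card_le_card (hA t)
      _ ≤ ∑ j ∈ Finset.univ.filter (fun j : Fin g => (j : ℕ) < t), (cov j).card :=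
          Finset.card_biUnion_le
      _ = C := rfl
  have h_out : (((S'.biUnion id) ∩ (U ∩ T)) \ P t).card ≤ ((S'.biUnion id) ∩ (U \ T)).card := by
    have hsub : ((S'.biUnion id) ∩ (U ∩ T)) \ P t ⊆
        ((S'.biUnion id) ∩ (U \ T)).biUnion (fun x => blueCov U T S x \ P t) := by
      intro b hb
      obtain ⟨hb1, hb2⟩ := Finset.mem_sdiff.1 hb
      obtain ⟨x, hxR, hbx⟩ := hF1 b hb1
      exact Finset.mem_biUnion.2 ⟨x, hxR, Finset.mem_sdiff.2 ⟨hbx, hb2⟩⟩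
    calc (((S'.biUnion id) ∩ (U ∩ T)) \ P t).card
        ≤ (((S'.biUnion id) ∩ (U \ T)).biUnion (fun x => blueCov U T S x \ P t)).card :=
          Finset.card_le_card hsub
      _ ≤ ∑ x ∈ (S'.biUnion id) ∩ (U \ T), (blueCov U T S x \ P t).card :=
          Finset.card_biUnion_le
      _ ≤ ∑ _x ∈ (S'.biUnion id) ∩ (U \ T), 1 :=
          Finset.sum_le_sum (fun x hx => ht2 x (Finset.mem_inter.1 hx).2)
      _ = ((S'.biUnion id) ∩ (U \ T)).card := by simp
  have hCD : C ≤ 2 * D := by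
    rw [hC, hD, Finset.mul_sum]
    apply Finset.sum_le_sum
    intro j hj
    have h2 : 2 ≤ m j := ht1 j (by simpa using hj)
    omega
  have hDn : g + D ≤ (U ∩ T).card := by
    have h1 : ∀ s : Finset (Fin g), (∑ i ∈ s, m i) = (∑ i ∈ s, (m i - 1)) + s.card := by
      intro s
      have : ∀ i ∈ s, m i = (m i - 1) + 1 := fun i _ => by have := hm1 i; omega
      rw [Finset.sum_congr rfl this, Finset.sum_add_distrib]
      simp
    have h2 : D ≤ ∑ i : Fin g, (m i - 1) :=
      Finset.sum_le_sum_of_subset (Finset.filter_subset _ _)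
    have h3 := h1 Finset.univ
    rw [Finset.card_univ, Fintype.card_fin] at h3
    omega
  have hb : ((S'.biUnion id) ∩ (U ∩ T)).card ≤ C + ((S'.biUnion id) ∩ (U \ T)).card := by
    omega
  unfold tapMargin
  omega

end Aux

theorem stmt_14 {α : Type*} [DecidableEq α] (U T : Finset α) (hTU : T ⊆ U)
    (S : Finset (Finset α)) (hS : ∀ E ∈ S, E.Nonempty ∧ E ⊆ U)
    (honered : ∀ E ∈ S, (E ∩ (U \ T)).card = 1)
    (hblue : ∀ b ∈ U ∩ T, ∃ E ∈ S, b ∈ E)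
    (g : ℕ) (r : Fin g → α) (hgreedy : IsGreedyExec U T S g r) :
    ∃ M : ℤ,
      IsGreatest {mg : ℤ | ∃ S' ⊆ S, tapMargin U T S' = mg} M ∧
      M ≤ 2 * (((U ∩ T).card : ℤ) - g) ∧
      tapMargin U T (S.filter (fun E => ∃ i : Fin g, r i ∈ E ∩ (U \ T)))
        = ((U ∩ T).card : ℤ) - g := by
  have hg := hgreedy
  obtain ⟨hred, hpos, hmax, hcover⟩ := hg
  -- r is injective
  have hinj : Function.Injective r := by
    have key : ∀ i j : Fin g, i < j → r i ≠ r j := by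
      intro i j h heq
      have hsub : blueCov U T S (r j) ⊆ prevCov U T S g r j := by
        rw [← heq]
        intro b hb
        exact Finset.mem_biUnion.2 ⟨i, by simp [h], hb⟩
      have hp := hpos j
      rw [Finset.sdiff_eq_empty_iff_subset.2 hsub] at hp
      simp at hp
    intro i j hij
    by_contra hne
    rcases lt_or_gt_of_ne hne with h | h
    · exact key i j h hij
    · exact key j i h hij.symm
  set Sg := S.filter (fun E => ∃ i : Fin g, r i ∈ E ∩ (U \ T)) with hSg
  have hblueSg : (Sg.biUnion id) ∩ (U ∩ T) = U ∩ T := by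
    apply Finset.Subset.antisymm Finset.inter_subset_right
    intro b hb
    obtain ⟨i, hbi⟩ := hcover b hb
    obtain ⟨hbB, E, hES, hriE, hbE⟩ := Finset.mem_filter.1 hbi
    refine Finset.mem_inter.2 ⟨Finset.mem_biUnion.2 ⟨E, ?_, hbE⟩, hb⟩
    exact Finset.mem_filter.2 ⟨hES, i, Finset.mem_inter.2 ⟨hriE, hred i⟩⟩
  have hredSg : (Sg.biUnion id) ∩ (U \ T) = Finset.univ.image r := by
    apply Finset.Subset.antisymm
    · intro x hx
      obtain ⟨hxU, hxR⟩ := Finset.mem_inter.1 hx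
      obtain ⟨E, hESg, hxE⟩ := Finset.mem_biUnion.1 hxU
      obtain ⟨hES, i, hri⟩ := Finset.mem_filter.1 hESg
      obtain ⟨y, hy⟩ := Finset.card_eq_one.1 (honered E hES)
      have h1 : x ∈ E ∩ (U \ T) := Finset.mem_inter.2 ⟨hxE, hxR⟩
      rw [hy, Finset.mem_singleton] at h1
      rw [hy, Finset.mem_singleton] at hri
      refine Finset.mem_image.2 ⟨i, Finset.mem_univ i, ?_⟩
      rw [hri, ← h1]
    · intro x hx
      obtain ⟨i, _, rfl⟩ := Finset.mem_image.1 hx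
      obtain ⟨b, hb⟩ := Finset.card_pos.1 (hpos i)
      obtain ⟨hbB, E, hES, hriE, hbE⟩ := Finset.mem_filter.1 (Finset.mem_sdiff.1 hb).1
      refine Finset.mem_inter.2 ⟨Finset.mem_biUnion.2 ⟨E, ?_, hriE⟩, hred i⟩
      exact Finset.mem_filter.2 ⟨hES, i, Finset.mem_inter.2 ⟨hriE, hred i⟩⟩
  have hmargSg : tapMargin U T Sg = ((U ∩ T).card : ℤ) - g := by
    unfold tapMargin
    rw [hblueSg, hredSg, Finset.card_image_of_injective _ hinj, Finset.card_univ,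
      Fintype.card_fin]
  set vals := S.powerset.image (tapMargin U T) with hvals
  have hvne : vals.Nonempty := ⟨tapMargin U T ∅, Finset.mem_image.2 ⟨∅, by simp, rfl⟩⟩
  set M := vals.max' hvne with hM
  have hMmem : ∃ S' ⊆ S, tapMargin U T S' = M := by
    obtain ⟨S', hSm, hval⟩ := Finset.mem_image.1 (vals.max'_mem hvne)
    exact ⟨S', Finset.mem_powerset.1 hSm, hval⟩
  refine ⟨M, ⟨hMmem, ?_⟩, ?_, hmargSg⟩
  · rintro mg ⟨S', hSm, rfl⟩
    exact Finset.le_max' _ _ (Finset.mem_image.2 ⟨S', Finset.mem_powerset.2 hSm, rfl⟩)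
  · obtain ⟨S', hSm, hval⟩ := hMmem
    rw [← hval]
    exact tapMargin_le_of_greedy U T S honered g r hgreedy S' hSm
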